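/- arXiv:1405.2997 — 2 statements merged into one kernel-verified Lean document; each statement's English description precedes it below -/
import Mathlib

section
/- Suppose real numbers $\alpha_1,\alpha_2,\alpha_3,\alpha_4$ and $\tilde\alpha_1,\tilde\alpha_2,\tilde\alpha_3,\tilde\alpha_4$ satisfy: (a) $\alpha_j \sum_{i\neq j}\alpha_i = \tilde\alpha_j \sum_{i\neq j}\tilde\alpha_i$ for each $j=1,2,3,4$; (b) $\alpha_1\alpha_3+\alpha_1\alpha_4+\alpha_2\alpha_3+\alpha_2\alpha_4 = \tilde\alpha_1\tilde\alpha_3+\tilde\alpha_1\tilde\alpha_4+\tilde\alpha_2\tilde\alpha_3+\tilde\alpha_2\tilde\alpha_4$; (c) $\alpha_1\alpha_2+\alpha_1\alpha_3+\alpha_2\alpha_4+\alpha_3\alpha_4 = \tilde\alpha_1\tilde\alpha_2+\tilde\alpha_1\tilde\alpha_3+\tilde\alpha_2\tilde\alpha_4+\tilde\alpha_3\tilde\alpha_4$; (d) $\alpha_1\alpha_2+\alpha_1\alpha_4+\alpha_2\alpha_3+\alpha_3\alpha_4 = \tilde\alpha_1\tilde\alpha_2+\tilde\alpha_1\tilde\alpha_4+\tilde\alpha_2\tilde\alpha_3+\tilde\alpha_3\tilde\alpha_4$.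 Then $\alpha_i\alpha_j = \tilde\alpha_i\tilde\alpha_j$ for all pairs $i < j$. -/
/-!
With `xᵢⱼ = aᵢaⱼ - bᵢbⱼ` every hypothesis says that the `xᵢⱼ` over some edges of `K₄` sum to
zero: over the three edges at a vertex, or over the four edges of a 4-cycle. The sum of the
relations at vertices `i` and `j` minus the relation of the 4-cycle avoiding `ij` is `2 xᵢⱼ = 0`;
this kills `x₁₂, x₁₃, x₂₃`, and the vertex relations at `1, 2, 3` then kill the rest.
-/

theorem eq_zero_of_K4_vertex_sums_of_cycle_sums {M : Type*} [AddCommGroup M]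
    [IsAddTorsionFree M] {x12 x13 x14 x23 x24 x34 : M}
    (h1 : x12 + x13 + x14 = 0) (h2 : x12 + x23 + x24 = 0) (h3 : x13 + x23 + x34 = 0)
    (hc12 : x13 + x14 + x23 + x24 = 0) (hc14 : x12 + x13 + x24 + x34 = 0)
    (hc13 : x12 + x14 + x23 + x34 = 0) :
    x12 = 0 ∧ x13 = 0 ∧ x14 = 0 ∧ x23 = 0 ∧ x24 = 0 ∧ x34 = 0 := by
  have h12 : x12 = 0 :=
    two_nsmul_eq_zero.mp <| by linear_combination (norm := module) h1 + h2 - hc12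
  have h13 : x13 = 0 :=
    two_nsmul_eq_zero.mp <| by linear_combination (norm := module) h1 + h3 - hc13
  have h23 : x23 = 0 :=
    two_nsmul_eq_zero.mp <| by linear_combination (norm := module) h2 + h3 - hc14
  refine ⟨h12, h13, ?_, h23, ?_, ?_⟩
  · simpa [h12, h13] using h1
  · simpa [h12, h23] using h2
  · simpa [h13, h23] using h3

theorem C4_quadratic_relations_general
    (a1 a2 a3 a4 b1 b2 b3 b4 : ℝ)
    (h1 : a1 * (a2 + a3 + a4) = b1 * (b2 + b3 + b4))
    (h2 : a2 * (a1 + a3 + a4) = b2 * (b1 + b3 + b4))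
    (h3 : a3 * (a1 + a2 + a4) = b3 * (b1 + b2 + b4))
    (h5 : a1*a3 + a1*a4 + a2*a3 + a2*a4 = b1*b3 + b1*b4 + b2*b3 + b2*b4)
    (h6 : a1*a2 + a1*a3 + a2*a4 + a3*a4 = b1*b2 + b1*b3 + b2*b4 + b3*b4)
    (h7 : a1*a2 + a1*a4 + a2*a3 + a3*a4 = b1*b2 + b1*b4 + b2*b3 + b3*b4) :
    a1*a2 = b1*b2 ∧ a1*a3 = b1*b3 ∧ a1*a4 = b1*b4 ∧
    a2*a3 = b2*b3 ∧ a2*a4 = b2*b4 ∧ a3*a4 = b3*b4 := by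
  have := eq_zero_of_K4_vertex_sums_of_cycle_sums (x12 := a1*a2 - b1*b2) (x13 := a1*a3 - b1*b3)
    (x14 := a1*a4 - b1*b4) (x23 := a2*a3 - b2*b3) (x24 := a2*a4 - b2*b4) (x34 := a3*a4 - b3*b4)
    (by linear_combination h1) (by linear_combination h2) (by linear_combination h3)
    (by linear_combination h5) (by linear_combination h6) (by linear_combination h7)
  simpa only [sub_eq_zero] using this

theorem C4_quadratic_relations
    (a1 a2 a3 a4 b1 b2 b3 b4 : ℝ)
    (h1 : a1 * (a2 + a3 + a4) = b1 * (b2 + b3 + b4))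
    (h2 : a2 * (a1 + a3 + a4) = b2 * (b1 + b3 + b4))
    (h3 : a3 * (a1 + a2 + a4) = b3 * (b1 + b2 + b4))
    (h4 : a4 * (a1 + a2 + a3) = b4 * (b1 + b2 + b3))
    (h5 : a1*a3 + a1*a4 + a2*a3 + a2*a4 = b1*b3 + b1*b4 + b2*b3 + b2*b4)
    (h6 : a1*a2 + a1*a3 + a2*a4 + a3*a4 = b1*b2 + b1*b3 + b2*b4 + b3*b4)
    (h7 : a1*a2 + a1*a4 + a2*a3 + a3*a4 = b1*b2 + b1*b4 + b2*b3 + b3*b4) :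
    a1*a2 = b1*b2 ∧ a1*a3 = b1*b3 ∧ a1*a4 = b1*b4 ∧
    a2*a3 = b2*b3 ∧ a2*a4 = b2*b4 ∧ a3*a4 = b3*b4 :=
  C4_quadratic_relations_general a1 a2 a3 a4 b1 b2 b3 b4 h1 h2 h3 h5 h6 h7
end

section
/- Suppose real numbers $\alpha_1,\alpha_2,\alpha_3,\alpha_4$ (all nonzero) and $\tilde\alpha_1,\tilde\alpha_2,\tilde\alpha_3,\tilde\alpha_4$ (all nonzero) satisfy: (1) $\sum_i \alpha_i = \sum_i \tilde\alpha_i$; (2) $\alpha_i\alpha_j = \tilde\alpha_i\tilde\alpha_j$ for all $i \neq j$; (3) each of the four triple products $\alpha_1\alpha_3\alpha_4+\alpha_2\alpha_3\alpha_4$, $\alpha_1\alpha_2\alpha_4+\alpha_1\alpha_3\alpha_4$, $\alpha_1\alpha_2\alpha_3+\alpha_1\alpha_2\alpha_4$, $\alpha_1\alpha_2\alpha_3+\alpha_2\alpha_3\alpha_4$ equals the corresponding expression in the $\tilde\alpha$'s; (4) $\alpha_1\alpha_2\alpha_3\alpha_4 = \tilde\alpha_1\tilde\alpha_2\tilde\alpha_3\tilde\alpha_4$.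 Then either $\alpha_i = \tilde\alpha_i$ for all $i$, or there exists a real $\alpha \neq 0$ with $(\alpha_1,\alpha_2,\alpha_3,\alpha_4) = (\alpha,-\alpha,\alpha,-\alpha)$ and $(\tilde\alpha_1,\tilde\alpha_2,\tilde\alpha_3,\tilde\alpha_4) = (-\alpha,\alpha,-\alpha,\alpha)$. -/
/-!
The pairwise products determine `a` up to a global sign: `b₁² (a₂a₃) = (a₁a₂)(a₁a₃) = a₁² (a₂a₃)`,
and then `bᵢ = a₁aᵢ / b₁`. If `b = -a`, the triple-product conditions say that an odd expression
equals its own negative, hence vanishes, and this forces neighbouring entries to cancel.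
-/

section

variable {R : Type*} [CommRing R] [NoZeroDivisors R]

theorem eq_or_eq_neg_of_mul_eq_mul {a₁ a₂ a₃ b₁ b₂ b₃ : R} (ha₂₃ : a₂ * a₃ ≠ 0)
    (h₁₂ : a₁ * a₂ = b₁ * b₂) (h₁₃ : a₁ * a₃ = b₁ * b₃) (h₂₃ : a₂ * a₃ = b₂ * b₃) :
    b₁ = a₁ ∨ b₁ = -a₁ := by
  have hsq : (b₁ * b₁ - a₁ * a₁) * (a₂ * a₃) = 0 := by
    linear_combination b₁ * b₁ * h₂₃ - b₁ * b₃ * h₁₂ - a₁ * a₂ * h₁₃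
  rw [← mul_self_eq_mul_self_iff, ← sub_eq_zero]
  exact (mul_eq_zero.mp hsq).resolve_right ha₂₃

theorem eq_or_eq_neg_of_pairwise_mul_eq {a₁ a₂ a₃ a₄ b₁ b₂ b₃ b₄ : R}
    (ha₁ : a₁ ≠ 0) (ha₂ : a₂ ≠ 0) (ha₃ : a₃ ≠ 0)
    (h₁₂ : a₁ * a₂ = b₁ * b₂) (h₁₃ : a₁ * a₃ = b₁ * b₃) (h₁₄ : a₁ * a₄ = b₁ * b₄)
    (h₂₃ : a₂ * a₃ = b₂ * b₃) :
    (b₁ = a₁ ∧ b₂ = a₂ ∧ b₃ = a₃ ∧ b₄ = a₄) ∨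
      (b₁ = -a₁ ∧ b₂ = -a₂ ∧ b₃ = -a₃ ∧ b₄ = -a₄) := by
  rcases eq_or_eq_neg_of_mul_eq_mul (mul_ne_zero ha₂ ha₃) h₁₂ h₁₃ h₂₃ with rfl | rfl
  · left
    exact ⟨rfl, (mul_left_cancel₀ ha₁ h₁₂).symm, (mul_left_cancel₀ ha₁ h₁₃).symm,
      (mul_left_cancel₀ ha₁ h₁₄).symm⟩
  · right
    refine ⟨rfl, ?_, ?_, ?_⟩ <;> refine mul_left_cancel₀ ha₁ ?_
    · linear_combination h₁₂
    · linear_combination h₁₃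
    · linear_combination h₁₄

theorem alternating_of_triple_sums_neg [CharZero R] {a₁ a₂ a₃ a₄ : R}
    (ha₁ : a₁ ≠ 0) (ha₂ : a₂ ≠ 0) (ha₃ : a₃ ≠ 0) (ha₄ : a₄ ≠ 0)
    (hc₁ : a₁*a₃*a₄ + a₂*a₃*a₄ = (-a₁)*(-a₃)*(-a₄) + (-a₂)*(-a₃)*(-a₄))
    (hc₂ : a₁*a₂*a₄ + a₁*a₃*a₄ = (-a₁)*(-a₂)*(-a₄) + (-a₁)*(-a₃)*(-a₄))
    (hc₃ : a₁*a₂*a₃ + a₁*a₂*a₄ = (-a₁)*(-a₂)*(-a₃) + (-a₁)*(-a₂)*(-a₄)) :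
    a₂ = -a₁ ∧ a₃ = a₁ ∧ a₄ = -a₁ := by
  have add_eq_zero_of_eq_neg {x y : R} (u v : R) (hxy : x * y ≠ 0)
      (h : x * y * (u + v) = -(x * y * (u + v))) : u + v = 0 :=
    (mul_eq_zero.mp (CharZero.eq_neg_self_iff.mp h)).resolve_left hxy
  have s₁₂ := add_eq_zero_of_eq_neg a₁ a₂ (mul_ne_zero ha₃ ha₄) (by linear_combination hc₁)
  have s₂₃ := add_eq_zero_of_eq_neg a₂ a₃ (mul_ne_zero ha₁ ha₄) (by linear_combination hc₂)
  have s₃₄ := add_eq_zero_of_eq_neg a₃ a₄ (mul_ne_zero ha₁ ha₂) (by linear_combination hc₃)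
  refine ⟨?_, ?_, ?_⟩
  · linear_combination s₁₂
  · linear_combination s₂₃ - s₁₂
  · linear_combination s₃₄ - s₂₃ + s₁₂

end

theorem C4_isospectral_algebra_general
    (a1 a2 a3 a4 b1 b2 b3 b4 : ℝ)
    (ha1 : a1 ≠ 0) (ha2 : a2 ≠ 0) (ha3 : a3 ≠ 0) (ha4 : a4 ≠ 0)
    (h12 : a1*a2 = b1*b2) (h13 : a1*a3 = b1*b3) (h14 : a1*a4 = b1*b4)
    (h23 : a2*a3 = b2*b3)
    (hc1 : a1*a3*a4 + a2*a3*a4 = b1*b3*b4 + b2*b3*b4)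
    (hc2 : a1*a2*a4 + a1*a3*a4 = b1*b2*b4 + b1*b3*b4)
    (hc3 : a1*a2*a3 + a1*a2*a4 = b1*b2*b3 + b1*b2*b4) :
    (a1 = b1 ∧ a2 = b2 ∧ a3 = b3 ∧ a4 = b4) ∨
    (∃ α : ℝ, α ≠ 0 ∧ a1 = α ∧ a2 = -α ∧ a3 = α ∧ a4 = -α ∧
      b1 = -α ∧ b2 = α ∧ b3 = -α ∧ b4 = α) := by
  rcases eq_or_eq_neg_of_pairwise_mul_eq ha1 ha2 ha3 h12 h13 h14 h23 with
    ⟨rfl, rfl, rfl, rfl⟩ | ⟨rfl, rfl, rfl, rfl⟩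
  · exact Or.inl ⟨rfl, rfl, rfl, rfl⟩
  · obtain ⟨rfl, rfl, rfl⟩ := alternating_of_triple_sums_neg ha1 ha2 ha3 ha4 hc1 hc2 hc3
    exact Or.inr ⟨_, ha1, rfl, rfl, rfl, rfl, rfl, neg_neg _, rfl, neg_neg _⟩

theorem C4_isospectral_algebra
    (a1 a2 a3 a4 b1 b2 b3 b4 : ℝ)
    (ha1 : a1 ≠ 0) (ha2 : a2 ≠ 0) (ha3 : a3 ≠ 0) (ha4 : a4 ≠ 0)
    (hb1 : b1 ≠ 0) (hb2 : b2 ≠ 0) (hb3 : b3 ≠ 0) (hb4 : b4 ≠ 0)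
    (hsum : a1 + a2 + a3 + a4 = b1 + b2 + b3 + b4)
    (h12 : a1*a2 = b1*b2) (h13 : a1*a3 = b1*b3) (h14 : a1*a4 = b1*b4)
    (h23 : a2*a3 = b2*b3) (h24 : a2*a4 = b2*b4) (h34 : a3*a4 = b3*b4)
    (hc1 : a1*a3*a4 + a2*a3*a4 = b1*b3*b4 + b2*b3*b4)
    (hc2 : a1*a2*a4 + a1*a3*a4 = b1*b2*b4 + b1*b3*b4)
    (hc3 : a1*a2*a3 + a1*a2*a4 = b1*b2*b3 + b1*b2*b4)
    (hc4 : a1*a2*a3 + a2*a3*a4 = b1*b2*b3 + b2*b3*b4)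
    (hq : a1*a2*a3*a4 = b1*b2*b3*b4) :
    (a1 = b1 ∧ a2 = b2 ∧ a3 = b3 ∧ a4 = b4) ∨
    (∃ α : ℝ, α ≠ 0 ∧ a1 = α ∧ a2 = -α ∧ a3 = α ∧ a4 = -α ∧
      b1 = -α ∧ b2 = α ∧ b3 = -α ∧ b4 = α) :=
  C4_isospectral_algebra_general a1 a2 a3 a4 b1 b2 b3 b4 ha1 ha2 ha3 ha4 h12 h13 h14 h23 hc1 hc2 hc3
end
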